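/- Let gC, gD, hC, hD, N0 be positive real constants and define F2(pC, pD, z1, z2, y1, y2) = log(1+z1) + log(1+z2) − z1 + 2·y1·√((1+z1)·pC·gC) − y1²·(pC·gC + N0 + pD·hD) − z2 + 2·y2·√((1+z2)·pD·gD) − y2²·(pD·gD + N0 + pC·hC), where log is the natural logarithm and √ is the real square root. Then F2 satisfies the Kurdyka–Łojasiewicz property at every point x̄ = (p̄C, p̄D, z̄1, z̄2, ȳ1, ȳ2) with all coordinates positive: there exist θ ∈ [1/2, 1), a constant η > 0, and an open neighborhood U of x̄ such that for all x ∈ U with positive coordinates, |F2(x) − F2(x̄)|^θ ≤ η · ‖∇F2(x)‖, where ∇F2 denotes the gradient (Fréchet derivative) of F2. -/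

import Mathlib

/-- The quadratic-transformed objective `F2` as a function of six real
variables `(pC, pD, z1, z2, y1, y2)`. -/
noncomputable def F2 (gC gD hC hD N0 : ℝ) (x : ℝ × ℝ × ℝ × ℝ × ℝ × ℝ) : ℝ :=
  match x with
  | (pC, pD, z1, z2, y1, y2) =>
    Real.log (1 + z1) + Real.log (1 + z2)
      - z1 + 2 * y1 * Real.sqrt ((1 + z1) * pC * gC)
      - y1 ^ 2 * (pC * gC + N0 + pD * hD)
      - z2 + 2 * y2 * Real.sqrt ((1 + z2) * pD * gD)
      - y2 ^ 2 * (pD * gD + N0 + pC * hC)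

/-- A point of `ℝ⁶` has all coordinates positive. -/
def AllPos (x : ℝ × ℝ × ℝ × ℝ × ℝ × ℝ) : Prop :=
  0 < x.1 ∧ 0 < x.2.1 ∧ 0 < x.2.2.1 ∧ 0 < x.2.2.2.1 ∧ 0 < x.2.2.2.2.1 ∧
    0 < x.2.2.2.2.2

/-!
`F2` is smooth on the positive orthant, and it has no critical point there because of a scaling
symmetry: replacing `(pC, pD, y1, y2)` by `(s²pC, s²pD, y1/s, y2/s)` leaves every term unchanged
except the noise terms `-yᵢ² N0`, which become `-yᵢ² N0 / s²`. Differentiating at `s = 1` gives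
`∇F2(x) · v(x) = 2 N0 (y1² + y2²) > 0` for an explicit direction `v(x)`, so `‖∇F2‖` is bounded
below by a positive constant near `x̄`. Near a non-critical point the KL inequality holds with
`θ = 1/2` simply because `|F2 x - F2 x̄|` is small while the gradient is not.
-/

open Filter Topology

theorem eventually_rpow_abs_sub_le_mul {E : Type*} [TopologicalSpace E] {f g : E → ℝ}
    {a : E} (hf : ContinuousAt f a) (hg : ContinuousAt g a) (hga : 0 < g a) {θ : ℝ}
    (hθ : 0 ≤ θ) :
    ∃ η > 0, ∀ᶠ x in 𝓝 a, |f x - f a| ^ θ ≤ η * g x := by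
  refine ⟨2 / g a, by positivity, ?_⟩
  have hg_half : ∀ᶠ x in 𝓝 a, g a / 2 < g x := hg (Ioi_mem_nhds (half_lt_self hga))
  have hf_near : ∀ᶠ x in 𝓝 a, |f x - f a| < 1 := by
    have : ContinuousAt (fun x => |f x - f a|) a := (hf.sub continuousAt_const).abs
    exact this (Iio_mem_nhds (by simp))
  filter_upwards [hg_half, hf_near] with x hgx hfx
  calc |f x - f a| ^ θ ≤ 1 := Real.rpow_le_one (abs_nonneg _) hfx.le hθ
    _ = 2 / g a * (g a / 2) := by field_simp
    _ ≤ 2 / g a * g x := by gcongr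

section F2

variable (gC gD hC hD N0 : ℝ)

theorem F2_scaling (pC pD z1 z2 y1 y2 : ℝ) {s : ℝ} (hs : 0 < s) :
    F2 gC gD hC hD N0 (s ^ 2 * pC, s ^ 2 * pD, z1, z2, y1 / s, y2 / s) =
      F2 gC gD hC hD N0 (pC, pD, z1, z2, y1, y2) +
        N0 * (y1 ^ 2 + y2 ^ 2) * (1 - (s ^ 2)⁻¹) := by
  have hsqrt : ∀ a b g : ℝ,
      Real.sqrt ((1 + a) * (s ^ 2 * b) * g) = s * Real.sqrt ((1 + a) * b * g) := by
    intro a b g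
    rw [show (1 + a) * (s ^ 2 * b) * g = s ^ 2 * ((1 + a) * b * g) by ring,
      Real.sqrt_mul (sq_nonneg s), Real.sqrt_sq hs.le]
  simp only [F2, hsqrt]
  field_simp
  ring

theorem differentiableAt_F2 (hgC : 0 < gC) (hgD : 0 < gD) {x : ℝ × ℝ × ℝ × ℝ × ℝ × ℝ}
    (hx : AllPos x) : DifferentiableAt ℝ (F2 gC gD hC hD N0) x := by
  obtain ⟨pC, pD, z1, z2, y1, y2⟩ := x
  obtain ⟨hpC, hpD, hz1, hz2, -, -⟩ := hx
  have : (1 + z1) * pC * gC ≠ 0 := by positivity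
  have : (1 + z2) * pD * gD ≠ 0 := by positivity
  have : 1 + z1 ≠ 0 := by positivity
  have : 1 + z2 ≠ 0 := by positivity
  change DifferentiableAt ℝ (fun x : ℝ × ℝ × ℝ × ℝ × ℝ × ℝ =>
    Real.log (1 + x.2.2.1) + Real.log (1 + x.2.2.2.1)
      - x.2.2.1 + 2 * x.2.2.2.2.1 * Real.sqrt ((1 + x.2.2.1) * x.1 * gC)
      - x.2.2.2.2.1 ^ 2 * (x.1 * gC + N0 + x.2.1 * hD)
      - x.2.2.2.1 + 2 * x.2.2.2.2.2 * Real.sqrt ((1 + x.2.2.2.1) * x.2.1 * gD)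
      - x.2.2.2.2.2 ^ 2 * (x.2.1 * gD + N0 + x.1 * hC)) _
  fun_prop (disch := assumption)

/-- The velocity at `s = 1` of the curve `s ↦ (s²pC, s²pD, z1, z2, y1/s, y2/s)` of
`F2_scaling`. -/
def scalingDir (x : ℝ × ℝ × ℝ × ℝ × ℝ × ℝ) : ℝ × ℝ × ℝ × ℝ × ℝ × ℝ :=
  (2 * x.1, 2 * x.2.1, 0, 0, -x.2.2.2.2.1, -x.2.2.2.2.2)

theorem fderiv_F2_scalingDir {x : ℝ × ℝ × ℝ × ℝ × ℝ × ℝ}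
    (hx : DifferentiableAt ℝ (F2 gC gD hC hD N0) x) :
    fderiv ℝ (F2 gC gD hC hD N0) x (scalingDir x) =
      2 * N0 * (x.2.2.2.2.1 ^ 2 + x.2.2.2.2.2 ^ 2) := by
  obtain ⟨pC, pD, z1, z2, y1, y2⟩ := x
  have hdiv : ∀ y : ℝ, HasDerivAt (fun s : ℝ => y / s) (-y) 1 := fun y => by
    simpa [div_eq_mul_inv] using (hasDerivAt_inv one_ne_zero).const_mul y
  have hsq : ∀ p : ℝ, HasDerivAt (fun s : ℝ => s ^ 2 * p) (2 * p) 1 := fun p => by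
    simpa using (hasDerivAt_pow 2 (1 : ℝ)).mul_const p
  have hcurve :
      HasDerivAt (fun s : ℝ => (s ^ 2 * pC, s ^ 2 * pD, z1, z2, y1 / s, y2 / s))
        (scalingDir (pC, pD, z1, z2, y1, y2)) 1 :=
    (hsq pC).prodMk <| (hsq pD).prodMk <| (hasDerivAt_const _ z1).prodMk <|
      (hasDerivAt_const _ z2).prodMk <| (hdiv y1).prodMk (hdiv y2)
  have hchain := hx.hasFDerivAt.comp_hasDerivAt_of_eq (1 : ℝ) hcurve (by simp)
  have hscaled : HasDerivAt
      (fun s : ℝ => F2 gC gD hC hD N0 (s ^ 2 * pC, s ^ 2 * pD, z1, z2, y1 / s, y2 / s))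
      (2 * N0 * (y1 ^ 2 + y2 ^ 2)) 1 := by
    have hinv := ((hasDerivAt_pow 2 (1 : ℝ)).inv (by norm_num)).const_sub 1
    refine ((hinv.const_mul (N0 * (y1 ^ 2 + y2 ^ 2))).const_add
      (F2 gC gD hC hD N0 (pC, pD, z1, z2, y1, y2))).congr_deriv (by norm_num; ring)
      |>.congr_of_eventuallyEq ?_
    filter_upwards [Ioi_mem_nhds one_pos] with s hs
    exact F2_scaling gC gD hC hD N0 pC pD z1 z2 y1 y2 hs
  exact hchain.unique hscaled

theorem div_norm_scalingDir_le_norm_fderiv_F2 (hgC : 0 < gC) (hgD : 0 < gD)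
    {x : ℝ × ℝ × ℝ × ℝ × ℝ × ℝ} (hx : AllPos x) :
    2 * N0 * (x.2.2.2.2.1 ^ 2 + x.2.2.2.2.2 ^ 2) / ‖scalingDir x‖ ≤
      ‖fderiv ℝ (F2 gC gD hC hD N0) x‖ := by
  refine div_le_of_le_mul₀ (norm_nonneg _) (norm_nonneg _) ?_
  rw [← fderiv_F2_scalingDir gC gD hC hD N0
    (differentiableAt_F2 gC gD hC hD N0 hgC hgD hx)]
  exact (le_abs_self _).trans ((fderiv ℝ (F2 gC gD hC hD N0) x).le_opNorm _)

end F2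

theorem F2_KL_property_general
    (gC gD hC hD N0 : ℝ) (hgC : 0 < gC) (hgD : 0 < gD)
    (hN0 : 0 < N0)
    (xbar : ℝ × ℝ × ℝ × ℝ × ℝ × ℝ) (hxbar : AllPos xbar) :
    ∃ θ ∈ Set.Ico (1/2 : ℝ) 1, ∃ η : ℝ, 0 < η ∧
      ∃ U : Set (ℝ × ℝ × ℝ × ℝ × ℝ × ℝ), IsOpen U ∧ xbar ∈ U ∧
        ∀ x ∈ U, AllPos x →
          |F2 gC gD hC hD N0 x - F2 gC gD hC hD N0 xbar| ^ θ ≤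
            η * ‖fderiv ℝ (F2 gC gD hC hD N0) x‖ := by
  set m : ℝ × ℝ × ℝ × ℝ × ℝ × ℝ → ℝ :=
    fun x => 2 * N0 * (x.2.2.2.2.1 ^ 2 + x.2.2.2.2.2 ^ 2) / ‖scalingDir x‖ with hm_def
  have hdir_norm : ‖scalingDir xbar‖ ≠ 0 :=
    norm_ne_zero_iff.mpr fun h =>
      hxbar.1.ne' (by simpa [scalingDir] using congrArg Prod.fst h)
  have hm_cont : ContinuousAt m xbar := by
    simp only [hm_def, scalingDir]
    fun_prop (disch := exact hdir_norm)
  have hm_pos : 0 < m xbar := by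
    have hy1 := hxbar.2.2.2.2.1
    positivity
  obtain ⟨η, hη, hKL⟩ := eventually_rpow_abs_sub_le_mul
    (differentiableAt_F2 gC gD hC hD N0 hgC hgD hxbar).continuousAt hm_cont hm_pos
    (θ := 1 / 2) (by norm_num)
  obtain ⟨U, hKL_U, hU, hxbar_U⟩ := eventually_nhds_iff.mp hKL
  refine ⟨1 / 2, ⟨le_rfl, by norm_num⟩, η, hη, U, hU, hxbar_U, fun x hx hx_pos => ?_⟩
  exact (hKL_U x hx).trans (mul_le_mul_of_nonneg_left
    (div_norm_scalingDir_le_norm_fderiv_F2 gC gD hC hD N0 hgC hgD hx_pos) hη.le)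

/-- Kurdyka–Łojasiewicz property of `F2` (Lemma 1 of the paper): at every point
`x̄` with all coordinates positive, there exist an exponent `θ ∈ [1/2, 1)`, a
constant `η > 0`, and an open neighborhood `U` of `x̄` such that for all
`x ∈ U` with positive coordinates, `|F2 x − F2 x̄|^θ ≤ η · ‖∇F2 x‖`. -/
theorem F2_KL_property
    (gC gD hC hD N0 : ℝ) (hgC : 0 < gC) (hgD : 0 < gD) (hhC : 0 < hC)
    (hhD : 0 < hD) (hN0 : 0 < N0)
    (xbar : ℝ × ℝ × ℝ × ℝ × ℝ × ℝ) (hxbar : AllPos xbar) :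
    ∃ θ ∈ Set.Ico (1/2 : ℝ) 1, ∃ η : ℝ, 0 < η ∧
      ∃ U : Set (ℝ × ℝ × ℝ × ℝ × ℝ × ℝ), IsOpen U ∧ xbar ∈ U ∧
        ∀ x ∈ U, AllPos x →
          |F2 gC gD hC hD N0 x - F2 gC gD hC hD N0 xbar| ^ θ ≤
            η * ‖fderiv ℝ (F2 gC gD hC hD N0) x‖ :=
  F2_KL_property_general gC gD hC hD N0 hgC hgD hN0 xbar hxbar
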